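/- arXiv:2412.14757 — 4 statements merged into one kernel-verified Lean document; each statement's English description precedes it below -/
import Mathlib

section
/- Tightness of the ⌊|V_S|/2⌋ shot bound (Theorem 2, tightness part): For every k ≥ 1, consider the distribution instance in which G_N consists of two nodes u, v joined by a single channel of width W_c = 1, the graph state G_S is a perfect matching on 2k vertices s_1, …, s_k, t_1, …, t_k with edge set exactly {s_i t_i : 1 ≤ i ≤ k} (k disjoint Bell pairs), and α_D(s_i) = u, α_D(t_i) = v for all i. Then every valid N-shot Bell pair strategy for this instance satisfies N ≥ k = ⌊|V_S|/2⌋. -/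
/-- A one-shot Bell pair strategy on the network `(G_N, W_c)` for a graph state with
vertex type `V_S`: it assigns to each oriented channel `(u,v)` and each graph-state
vertex `s` a value in `{-1, 0, 1}`, antisymmetrically in the orientation, vanishing off
the channels of the network, and such that each channel `e` is used at most `W_c e`
times in total. -/
structure OneShotStrategy (V_N V_S : Type*) [Fintype V_S]
    (G_N : SimpleGraph V_N) (W_c : Sym2 V_N → ℕ) where
  b : V_N → V_N → V_S → ℤ
  antisymm : ∀ u v s, b u v s = - b v u s
  bounded : ∀ u v s, |b u v s| ≤ 1
  supported : ∀ u v, ¬ G_N.Adj u v → ∀ s, b u v s = 0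
  capacity : ∀ u v, G_N.Adj u v →
    (∑ s : V_S, |b u v s|) ≤ (W_c (Sym2.mk u v) : ℤ)

/-- The reachable set of the graph-state vertex `s` under the `N`-shot strategy `bs`:
the smallest set of network nodes containing the assigned node `αD s` and closed under
following, from a reached node `u`, any positively-assigned oriented channel `(u,v)` of
any of the one-shot strategies in `bs`. -/
inductive Reachable {V_N V_S : Type*} [Fintype V_S] {G_N : SimpleGraph V_N}
    {W_c : Sym2 V_N → ℕ} (bs : List (OneShotStrategy V_N V_S G_N W_c))
    (αD : V_S → V_N) (s : V_S) : V_N → Prop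
  | base : Reachable bs αD s (αD s)
  | step {u v : V_N} (bk : OneShotStrategy V_N V_S G_N W_c) :
      Reachable bs αD s u → bk ∈ bs → 0 < bk.b u v s → Reachable bs αD s v

/-- An `N`-shot strategy `bs` is valid for the instance `(G_N, W_c, G_S, αD)` if for
every edge `s₁s₂` of the graph state the reachable sets of `s₁` and `s₂` intersect. -/
def IsValid {V_N V_S : Type*} [Fintype V_S] {G_N : SimpleGraph V_N}
    {W_c : Sym2 V_N → ℕ} (bs : List (OneShotStrategy V_N V_S G_N W_c))
    (G_S : SimpleGraph V_S) (αD : V_S → V_N) : Prop :=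
  ∀ s₁ s₂, G_S.Adj s₁ s₂ → ∃ n, Reachable bs αD s₁ n ∧ Reachable bs αD s₂ n

/-!
The two endpoints of every Bell pair `sᵢtᵢ` sit at different nodes, so the reachable sets of
`sᵢ` and `tᵢ` can only meet if some shot moves `sᵢ` or `tᵢ` across the channel. A channel of
width one carries a single graph-state vertex per shot, so distinct pairs are served by distinct
shots, and there are at least `k` shots.
-/

namespace OneShotStrategy

variable {V_N V_S : Type*} [Fintype V_S] {G_N : SimpleGraph V_N} {W_c : Sym2 V_N → ℕ}
  (bk : OneShotStrategy V_N V_S G_N W_c)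

lemma b_self (u : V_N) (s : V_S) : bk.b u u s = 0 := by
  have := bk.antisymm u u s
  omega

lemma ne_of_b_ne_zero {u v : V_N} {s : V_S} (h : bk.b u v s ≠ 0) : u ≠ v := by
  rintro rfl
  exact h (bk.b_self u s)

lemma b_swap_ne_zero {u v : V_N} {s : V_S} (h : bk.b u v s ≠ 0) : bk.b v u s ≠ 0 := by
  rw [bk.antisymm v u s]
  exact neg_ne_zero.mpr h

lemma eq_of_b_ne_zero_of_width_le_one {u v : V_N} {s t : V_S} (hW : W_c s(u, v) ≤ 1)
    (hs : bk.b u v s ≠ 0) (ht : bk.b u v t ≠ 0) : s = t := by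
  classical
  by_contra hst
  have hadj : G_N.Adj u v := by_contra fun h => hs (bk.supported u v h s)
  have hcap := bk.capacity u v hadj
  have hpair : |bk.b u v s| + |bk.b u v t| ≤ ∑ x, |bk.b u v x| := by
    rw [← Finset.sum_pair (f := fun x => |bk.b u v x|) hst]
    exact Finset.sum_le_sum_of_subset_of_nonneg (Finset.subset_univ _)
      fun _ _ _ => abs_nonneg _
  have := abs_pos.mpr hs
  have := abs_pos.mpr ht
  omega

end OneShotStrategy

lemma OneShotStrategy.b_zero_one_ne_zero {V_S : Type*} [Fintype V_S] {W_c : Sym2 (Fin 2) → ℕ}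
    (bk : OneShotStrategy (Fin 2) V_S ⊤ W_c) {u v : Fin 2} {s : V_S} (h : bk.b u v s ≠ 0) :
    bk.b 0 1 s ≠ 0 := by
  have huv := bk.ne_of_b_ne_zero h
  fin_cases u <;> fin_cases v
  · exact absurd rfl huv
  · exact h
  · exact bk.b_swap_ne_zero h
  · exact absurd rfl huv

section

variable {V_N V_S : Type*} [Fintype V_S] {G_N : SimpleGraph V_N} {W_c : Sym2 V_N → ℕ}
  {bs : List (OneShotStrategy V_N V_S G_N W_c)} {αD : V_S → V_N}

lemma Reachable.eq_or_exists_pos {s : V_S} {n : V_N} (h : Reachable bs αD s n) :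
    n = αD s ∨ ∃ bk ∈ bs, ∃ u v, 0 < bk.b u v s := by
  induction h with
  | base => exact Or.inl rfl
  | step bk _ hmem hpos _ => exact Or.inr ⟨bk, hmem, _, _, hpos⟩

lemma IsValid.exists_pos_of_adj {G_S : SimpleGraph V_S} (hv : IsValid bs G_S αD)
    {s₁ s₂ : V_S} (hadj : G_S.Adj s₁ s₂) (hne : αD s₁ ≠ αD s₂) :
    ∃ bk ∈ bs, ∃ s, (s = s₁ ∨ s = s₂) ∧ ∃ u v, 0 < bk.b u v s := by
  obtain ⟨n, h₁, h₂⟩ := hv s₁ s₂ hadj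
  rcases h₁.eq_or_exists_pos with rfl | ⟨bk, hmem, hpos⟩
  · rcases h₂.eq_or_exists_pos with h | ⟨bk, hmem, hpos⟩
    · exact absurd h hne
    · exact ⟨bk, hmem, s₂, Or.inr rfl, hpos⟩
  · exact ⟨bk, hmem, s₁, Or.inl rfl, hpos⟩

end

theorem matching_requires_k_shots_general (k : ℕ)
    (bs : List (OneShotStrategy (Fin 2) (Fin k ⊕ Fin k) ⊤ (fun _ => 1)))
    (hvalid : IsValid bs
      (SimpleGraph.fromRel fun a b => ∃ i : Fin k, a = Sum.inl i ∧ b = Sum.inr i)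
      (Sum.elim (fun _ => (0 : Fin 2)) (fun _ => (1 : Fin 2)))) :
    k ≤ bs.length := by
  have served : ∀ i : Fin k, ∃ m : Fin bs.length, ∃ s : Fin k ⊕ Fin k,
      Sum.elim id id s = i ∧ (bs.get m).b 0 1 s ≠ 0 := by
    intro i
    obtain ⟨bk, hmem, s, hs, u, v, hpos⟩ :=
      hvalid.exists_pos_of_adj (s₁ := .inl i) (s₂ := .inr i) (by simp) (by simp)
    obtain ⟨m, rfl⟩ := List.get_of_mem hmem
    exact ⟨m, s, by rcases hs with rfl | rfl <;> rfl, (bs.get m).b_zero_one_ne_zero hpos.ne'⟩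
  choose m s hs hne using served
  have hinj : Function.Injective m := fun i j hij => by
    rw [← hs i, ← hs j,
      (bs.get (m i)).eq_of_b_ne_zero_of_width_le_one le_rfl (hne i) (hij ▸ hne j)]
  simpa using Fintype.card_le_of_injective m hinj

/-- **Tightness of the `⌊|V_S|/2⌋` shot bound.**  On the network consisting of two
nodes `0, 1 : Fin 2` joined by a single channel of width `1` (the complete graph on
`Fin 2`), distributing the perfect matching `{sᵢtᵢ : 1 ≤ i ≤ k}` on the `2k` vertices
`Fin k ⊕ Fin k` (i.e. `k` disjoint Bell pairs) with `αD (inl i) = 0`, `αD (inr i) = 1`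
requires at least `k = ⌊|V_S|/2⌋` shots: every valid strategy has length `≥ k`. -/
theorem matching_requires_k_shots (k : ℕ) (hk : 1 ≤ k)
    (bs : List (OneShotStrategy (Fin 2) (Fin k ⊕ Fin k) ⊤ (fun _ => 1)))
    (hvalid : IsValid bs
      (SimpleGraph.fromRel fun a b => ∃ i : Fin k, a = Sum.inl i ∧ b = Sum.inr i)
      (Sum.elim (fun _ => (0 : Fin 2)) (fun _ => (1 : Fin 2)))) :
    k ≤ bs.length :=
  matching_requires_k_shots_general k bs hvalid
end

section
/- Any graph state can be distributed in at most |V_S| shots on a connected network (the guarantee of the graph state transfer scheme used as the first step in the proof of Theorem 2): For every distribution instance (G_N, W_c, G_S, α_D) in which G_N is connected and V_N is nonempty, there exists a natural number N ≤ |V_S| and a valid N-shot Bell pair strategy for the instance. -/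
/-! Fix a root `r` of the connected network. For each graph-state vertex `s`, one shot sends `s`
one step down the distance to `r` across every channel, each channel carrying only `s`. Every node
other than `r` has a neighbour strictly closer to `r`, so `r` is reachable from `αD s` for all `s`
after these `|V_S|` shots, and the reachable sets of any two vertices meet at `r`. -/

theorem SimpleGraph.Connected.exists_adj_dist_lt {V : Type*} {G : SimpleGraph V}
    (hconn : G.Connected) {u r : V} (hne : u ≠ r) :
    ∃ v, G.Adj u v ∧ G.dist v r < G.dist u r := by
  obtain ⟨p, hp⟩ := hconn.exists_walk_length_eq_dist u r
  cases p with
  | nil => exact absurd rfl hne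
  | cons hadj q =>
    refine ⟨_, hadj, ?_⟩
    calc G.dist _ r ≤ q.length := SimpleGraph.dist_le q
      _ < G.dist u r := by simp only [SimpleGraph.Walk.length_cons] at hp; omega

namespace OneShotStrategy

variable {V_N V_S : Type*} [Fintype V_S] {G_N : SimpleGraph V_N} {W_c : Sym2 V_N → ℕ}

open Classical in
noncomputable def descend (hW : ∀ e ∈ G_N.edgeSet, 1 ≤ W_c e) (f : V_N → ℕ) (s : V_S) :
    OneShotStrategy V_N V_S G_N W_c where
  b u v t := if t = s ∧ G_N.Adj u v then Int.sign ((f u : ℤ) - f v) else 0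
  antisymm u v t := by
    rw [G_N.adj_comm v u, ← neg_sub, Int.sign_neg]
    split_ifs <;> simp
  bounded u v t := by
    split_ifs
    · rcases Int.sign_trichotomy ((f u : ℤ) - f v) with h | h | h <;> simp [h]
    · simp
  supported u v hadj t := if_neg fun h => hadj h.2
  capacity u v hadj := by
    rw [Finset.sum_eq_single s (fun t _ hts => by simp [hts]) (by simp)]
    have hW' : (1 : ℤ) ≤ W_c s(u, v) := by exact_mod_cast hW _ hadj
    rcases Int.sign_trichotomy ((f u : ℤ) - f v) with h | h | h <;> simp [hadj, h] <;> omega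

theorem descend_pos {hW : ∀ e ∈ G_N.edgeSet, 1 ≤ W_c e} {f : V_N → ℕ} {s : V_S} {u v : V_N}
    (hadj : G_N.Adj u v) (hlt : f v < f u) : 0 < (descend hW f s).b u v s := by
  have hpos : (0 : ℤ) < f u - f v := by omega
  simp only [descend, if_pos (And.intro rfl hadj), Int.sign_eq_one_of_pos hpos, Int.one_pos]

end OneShotStrategy

theorem Reachable.of_descend_mem {V_N V_S : Type*} [Fintype V_S] {G_N : SimpleGraph V_N}
    {W_c : Sym2 V_N → ℕ} {bs : List (OneShotStrategy V_N V_S G_N W_c)} {αD : V_S → V_N}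
    {s : V_S} {hW : ∀ e ∈ G_N.edgeSet, 1 ≤ W_c e} {f : V_N → ℕ} {r : V_N}
    (hmem : OneShotStrategy.descend hW f s ∈ bs)
    (hdesc : ∀ u ≠ r, ∃ v, G_N.Adj u v ∧ f v < f u) {u : V_N}
    (hu : Reachable bs αD s u) : Reachable bs αD s r := by
  induction hf : f u using Nat.strong_induction_on generalizing u with
  | _ n ih =>
    by_cases hur : u = r
    · exact hur ▸ hu
    obtain ⟨v, hadj, hlt⟩ := hdesc u hur
    exact ih (f v) (hf ▸ hlt) (hu.step _ hmem (OneShotStrategy.descend_pos hadj hlt)) rfl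

theorem graph_state_transfer_shot_bound_general {V_N V_S : Type*} [Fintype V_S]
    (G_N : SimpleGraph V_N) (hconn : G_N.Connected)
    (W_c : Sym2 V_N → ℕ) (hW : ∀ e ∈ G_N.edgeSet, 1 ≤ W_c e)
    (G_S : SimpleGraph V_S) (αD : V_S → V_N) :
    ∃ bs : List (OneShotStrategy V_N V_S G_N W_c),
      bs.length ≤ Fintype.card V_S ∧ IsValid bs G_S αD := by
  obtain ⟨r⟩ := hconn.nonempty
  let bs := (Finset.univ : Finset V_S).toList.map (OneShotStrategy.descend hW (G_N.dist · r))
  have hroot : ∀ s, Reachable bs αD s r := fun s =>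
    Reachable.of_descend_mem (List.mem_map.2 ⟨s, by simp, rfl⟩)
      (fun _ hu => hconn.exists_adj_dist_lt hu) .base
  exact ⟨bs, by simp [bs], fun s₁ s₂ _ => ⟨r, hroot s₁, hroot s₂⟩⟩

/-- **Any graph state can be distributed in at most `|V_S|` shots on a connected
network** (the guarantee of the graph state transfer scheme). -/
theorem graph_state_transfer_shot_bound {V_N V_S : Type*} [Fintype V_N] [Fintype V_S]
    (G_N : SimpleGraph V_N) (hconn : G_N.Connected)
    (W_c : Sym2 V_N → ℕ) (hW : ∀ e ∈ G_N.edgeSet, 1 ≤ W_c e)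
    (G_S : SimpleGraph V_S) (αD : V_S → V_N) :
    ∃ bs : List (OneShotStrategy V_N V_S G_N W_c),
      bs.length ≤ Fintype.card V_S ∧ IsValid bs G_S αD :=
  graph_state_transfer_shot_bound_general G_N hconn W_c hW G_S αD
end

section
/- Any star graph state can be one-shot distributed in any connected network (the claim of Equation (9)): Let (G_N, W_c, G_S, α_D) be a distribution instance in which G_N is connected, V_N is nonempty, and G_S is a star graph: there is a center vertex c₀ ∈ V_S such that the edge set of G_S is exactly {c₀ s : s ∈ V_S, s ≠ c₀}. Then there exists a valid one-shot Bell pair strategy b for the instance which moreover assigns all used channels to the center, i.e., b((u,v), s) = 0 for every oriented channel (u,v) and every s ≠ c₀. -/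
/-!
Orient every channel away from the node `r = αD c₀`, i.e. in the direction of increasing
graph distance from `r`, and spend one Bell pair of it on the center `c₀`. In a connected
network every node `v ≠ r` has a neighbour strictly closer to `r`, so by induction on the
distance the reachable set of `c₀` is the whole network; hence it meets the (nonempty)
reachable set of every leaf, and every edge of a star contains the center.
-/

theorem Int.abs_sign_le_one (z : ℤ) : |z.sign| ≤ 1 := by
  rcases Int.sign_trichotomy z with h | h | h <;> simp [h]

namespace SimpleGraph

variable {V : Type*} {G : SimpleGraph V}

theorem Connected.exists_adj_dist_lt_s8 (hconn : G.Connected) {r v : V} (hrv : r ≠ v) :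
    ∃ u, G.Adj u v ∧ G.dist r u < G.dist r v := by
  obtain ⟨p, hp⟩ := hconn.exists_walk_length_eq_dist v r
  cases p with
  | nil => exact absurd rfl hrv
  | @cons _ u _ hvu q =>
    refine ⟨u, hvu.symm, ?_⟩
    rw [dist_comm (u := r) (v := v), ← hp, dist_comm, Walk.length_cons]
    exact Nat.lt_succ_of_le (dist_le q)

end SimpleGraph

namespace OneShotStrategy

variable {V_N V_S : Type*} [Fintype V_S] {G_N : SimpleGraph V_N} {W_c : Sym2 V_N → ℕ}

noncomputable def outwardFrom [DecidableEq V_S] [DecidableRel G_N.Adj]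
    (hW : ∀ e ∈ G_N.edgeSet, 1 ≤ W_c e) (r : V_N) (c : V_S) :
    OneShotStrategy V_N V_S G_N W_c where
  b u v s := if s = c ∧ G_N.Adj u v then Int.sign ((G_N.dist r v : ℤ) - G_N.dist r u) else 0
  antisymm u v s := by
    simp only [G_N.adj_comm v u]
    split_ifs
    · rw [← Int.sign_neg, neg_sub]
    · rw [neg_zero]
  bounded u v s := by
    split_ifs
    · exact Int.abs_sign_le_one _
    · simp
  supported u v huv s := by simp [huv]
  capacity u v huv := by
    rw [Fintype.sum_eq_single c fun s hs => by simp [hs]]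
    calc _ ≤ (1 : ℤ) := by split_ifs <;> simp [Int.abs_sign_le_one]
      _ ≤ W_c s(u, v) := by exact_mod_cast hW _ huv

variable [DecidableEq V_S] [DecidableRel G_N.Adj] (hW : ∀ e ∈ G_N.edgeSet, 1 ≤ W_c e)

theorem outwardFrom_b_of_ne {r : V_N} {c s : V_S} (hs : s ≠ c) (u v : V_N) :
    (outwardFrom hW r c).b u v s = 0 := by
  simp [outwardFrom, hs]

theorem outwardFrom_b_pos {r u v : V_N} (c : V_S) (huv : G_N.Adj u v)
    (hlt : G_N.dist r u < G_N.dist r v) : 0 < (outwardFrom hW r c).b u v c := by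
  simp [outwardFrom, huv, hlt]

end OneShotStrategy

section Reachability

variable {V_N V_S : Type*} [Fintype V_S] {G_N : SimpleGraph V_N} {W_c : Sym2 V_N → ℕ}

theorem reachable_of_forall_adj_dist_lt (hconn : G_N.Connected)
    {bs : List (OneShotStrategy V_N V_S G_N W_c)} {B : OneShotStrategy V_N V_S G_N W_c}
    (hB : B ∈ bs) (αD : V_S → V_N) (s : V_S)
    (hout : ∀ u v, G_N.Adj u v → G_N.dist (αD s) u < G_N.dist (αD s) v → 0 < B.b u v s)
    (v : V_N) : Reachable bs αD s v := by
  by_cases hv : αD s = v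
  · exact hv ▸ .base
  · obtain ⟨u, huv, hlt⟩ := hconn.exists_adj_dist_lt_s8 hv
    exact .step B (reachable_of_forall_adj_dist_lt hconn hB αD s hout u) hB (hout u v huv hlt)
termination_by G_N.dist (αD s) v

theorem reachable_outwardFrom [DecidableEq V_S] [DecidableRel G_N.Adj]
    (hconn : G_N.Connected) (hW : ∀ e ∈ G_N.edgeSet, 1 ≤ W_c e) (αD : V_S → V_N) (c : V_S)
    (v : V_N) : Reachable [OneShotStrategy.outwardFrom hW (αD c) c] αD c v :=
  reachable_of_forall_adj_dist_lt hconn (List.mem_singleton_self _) αD c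
    (fun _ _ huv hlt => OneShotStrategy.outwardFrom_b_pos hW c huv hlt) v

theorem isValid_of_forall_adj_reachable {bs : List (OneShotStrategy V_N V_S G_N W_c)}
    {G_S : SimpleGraph V_S} {αD : V_S → V_N}
    (h : ∀ s₁ s₂, G_S.Adj s₁ s₂ → (∀ v, Reachable bs αD s₁ v) ∨ ∀ v, Reachable bs αD s₂ v) :
    IsValid bs G_S αD := by
  intro s₁ s₂ hadj
  rcases h s₁ s₂ hadj with h₁ | h₂
  exacts [⟨αD s₂, h₁ _, .base⟩, ⟨αD s₁, .base, h₂ _⟩]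

end Reachability

theorem star_one_shot_distribution_general {V_N V_S : Type*} [Fintype V_S]
    (G_N : SimpleGraph V_N) (hconn : G_N.Connected)
    (W_c : Sym2 V_N → ℕ) (hW : ∀ e ∈ G_N.edgeSet, 1 ≤ W_c e)
    (G_S : SimpleGraph V_S) (c₀ : V_S)
    (hstar : ∀ s₁ s₂, G_S.Adj s₁ s₂ ↔
      (s₁ = c₀ ∧ s₂ ≠ c₀) ∨ (s₂ = c₀ ∧ s₁ ≠ c₀))
    (αD : V_S → V_N) :
    ∃ b : OneShotStrategy V_N V_S G_N W_c,
      IsValid [b] G_S αD ∧ ∀ u v s, s ≠ c₀ → b.b u v s = 0 := by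
  classical
  refine ⟨OneShotStrategy.outwardFrom hW (αD c₀) c₀, isValid_of_forall_adj_reachable ?_,
    fun u v _ hs => OneShotStrategy.outwardFrom_b_of_ne hW hs u v⟩
  intro s₁ s₂ hadj
  rcases (hstar s₁ s₂).1 hadj with ⟨rfl, -⟩ | ⟨rfl, -⟩
  exacts [.inl (reachable_outwardFrom hconn hW αD _), .inr (reachable_outwardFrom hconn hW αD _)]

/-- **Any star graph state can be one-shot distributed in any connected network**
(Equation (9)): if `G_S` is a star with center `c₀`, there is a valid one-shot Bell
pair strategy that assigns all used channels to the center, i.e. `b((u,v), s) = 0`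
for every `s ≠ c₀`. -/
theorem star_one_shot_distribution {V_N V_S : Type*} [Fintype V_N] [Fintype V_S]
    (G_N : SimpleGraph V_N) (hconn : G_N.Connected)
    (W_c : Sym2 V_N → ℕ) (hW : ∀ e ∈ G_N.edgeSet, 1 ≤ W_c e)
    (G_S : SimpleGraph V_S) (c₀ : V_S)
    (hstar : ∀ s₁ s₂, G_S.Adj s₁ s₂ ↔
      (s₁ = c₀ ∧ s₂ ≠ c₀) ∨ (s₂ = c₀ ∧ s₁ ≠ c₀))
    (αD : V_S → V_N) :
    ∃ b : OneShotStrategy V_N V_S G_N W_c,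
      IsValid [b] G_S αD ∧ ∀ u v s, s ≠ c₀ → b.b u v s = 0 :=
  star_one_shot_distribution_general G_N hconn W_c hW G_S c₀ hstar αD
end

section
/- One-shot distribution of a matching of Bell pairs is equivalent to multi-pair edge-disjoint paths (the correspondence established in the proof of Theorem 1, part 2): Let G be a finite simple graph and let (s_1, t_1), …, (s_k, t_k) be pairs of nodes of G with s_i ≠ t_i. Construct the network G_N with node set V(G) ⊕ (Fin k ⊕ Fin k), whose channels are all edges of G together with, for each i, a channel between a_i := inr(inl i) and s_i and a channel between b_i := inr(inr i) and t_i, all of width 1. Let the graph state G_S have vertex set Fin k ⊕ Fin k with edge set exactly {(inl i)(inr i) : 1 ≤ i ≤ k}, and let α_D(inl i) = a_i and α_D(inr i) = b_i. Then there exists a valid one-shot Bell pair strategy for this instance if and only if G contains paths P_1, …, P_k, where P_i joins s_i to t_i, that are pairwise edge-disjoint. -/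
/-! A valid strategy routes the two halves `inl i`, `inr i` of the `i`-th Bell pair from the
pendant nodes `aᵢ`, `bᵢ` to a common node. Collapsing every pendant node onto its attachment
point turns the union of the two routes into an `sᵢ`–`tᵢ` walk of `G`, each of whose edges
carries `inl i` or `inr i`; since a width-one channel carries at most one qubit, shortening
these walks to paths gives edge-disjoint paths. Conversely, along edge-disjoint paths `Pᵢ` let
`inl i` travel `aᵢ → sᵢ → Pᵢ → tᵢ` and `inr i` cross `bᵢ → tᵢ`: the halves meet at `tᵢ`, and
distinct qubits never share a channel. -/

theorem Sym2.map_inl_ne_mk_inr {α β : Type*} (e : Sym2 α) (b : β) (c : α ⊕ β) :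
    e.map Sum.inl ≠ s(Sum.inr b, c) := fun h => by
  have hb := Sym2.mem_mk_left (Sum.inr b) c
  rw [← h, Sym2.mem_map] at hb
  simp at hb

namespace SimpleGraph.Walk

variable {V W : Type*} {G : SimpleGraph V} {H : SimpleGraph W}

theorem exists_walk_edges_subset_map_edges (f : W → V)
    (hf : ∀ x y, H.Adj x y → f x ≠ f y → G.Adj (f x) (f y)) {x y : W} (p : H.Walk x y) :
    ∃ q : G.Walk (f x) (f y), q.edges ⊆ p.edges.map (Sym2.map f) := by
  induction p with
  | nil => exact ⟨nil, by simp⟩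
  | @cons x v y h p ih =>
    obtain ⟨q, hq⟩ := ih
    by_cases hxv : f x = f v
    · refine ⟨q.copy hxv.symm rfl, ?_⟩
      rw [edges_copy, edges_cons, List.map_cons]
      exact fun e he => List.mem_cons_of_mem _ (hq he)
    · refine ⟨cons (hf x v h hxv) q, ?_⟩
      rw [edges_cons, edges_cons, List.map_cons, Sym2.map_mk]
      exact List.cons_subset_cons _ hq

theorem IsTrail.symm_notMem_darts {x y : V} {w : G.Walk x y} (hw : w.IsTrail) {d : G.Dart}
    (hd : d ∈ w.darts) : d.symm ∉ w.darts := fun hd' =>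
  d.symm_ne (List.inj_on_of_nodup_map hw.edges_nodup hd' hd d.edge_symm)

open Classical in
/-- On a trail, the direction (`±1`) in which `p` crosses `xy`, or `0`; a walk crossing `xy`
both ways gets `0` there. -/
noncomputable def flow {u v : V} (p : G.Walk u v) (x y : V) : ℤ :=
  (if (x, y) ∈ p.darts.map (·.toProd) then 1 else 0) -
    (if (y, x) ∈ p.darts.map (·.toProd) then 1 else 0)

variable {u v : V} (p : G.Walk u v)

theorem flow_swap (x y : V) : p.flow x y = -p.flow y x := by
  simp only [flow]
  ring

theorem abs_flow_le_one (x y : V) : |p.flow x y| ≤ 1 := by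
  simp only [flow]
  split_ifs <;> norm_num

theorem mk_mem_edges_of_mem_map_darts {x y : V} (h : (x, y) ∈ p.darts.map (·.toProd)) :
    s(x, y) ∈ p.edges := by
  obtain ⟨d, hd, hxy⟩ := List.mem_map.mp h
  exact List.mem_map.mpr ⟨d, hd, by rw [Dart.edge, hxy]⟩

theorem flow_eq_zero {x y : V} (h : s(x, y) ∉ p.edges) : p.flow x y = 0 := by
  rw [flow, if_neg fun hd => h (p.mk_mem_edges_of_mem_map_darts hd),
    if_neg fun hd => h (Sym2.eq_swap ▸ p.mk_mem_edges_of_mem_map_darts hd), sub_zero]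

variable {p}

theorem IsTrail.flow_pos (hp : p.IsTrail) {d : G.Dart} (hd : d ∈ p.darts) :
    0 < p.flow d.fst d.snd := by
  have hrev : (d.snd, d.fst) ∉ p.darts.map (·.toProd) := by
    intro h
    obtain ⟨d', hd', hd'd⟩ := List.mem_map.mp h
    obtain rfl : d' = d.symm := Dart.ext _ _ hd'd
    exact hp.symm_notMem_darts hd hd'
  rw [flow, if_pos (List.mem_map_of_mem hd), if_neg hrev]
  norm_num

end SimpleGraph.Walk

namespace OneShotStrategy

variable {V_N V_S : Type*} [Fintype V_S] {G_N : SimpleGraph V_N} {W_c : Sym2 V_N → ℕ}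
  (B : OneShotStrategy V_N V_S G_N W_c)

def Uses (σ : V_S) (e : Sym2 V_N) : Prop :=
  ∃ x y, e = s(x, y) ∧ B.b x y σ ≠ 0

variable {B}

theorem uses_mk_iff {σ : V_S} {x y : V_N} : B.Uses σ s(x, y) ↔ B.b x y σ ≠ 0 := by
  refine ⟨?_, fun h => ⟨x, y, rfl, h⟩⟩
  rintro ⟨x', y', he, h⟩
  rcases Sym2.eq_iff.mp he with ⟨rfl, rfl⟩ | ⟨rfl, rfl⟩
  · exact h
  · rwa [B.antisymm, neg_ne_zero]

theorem adj_of_b_ne_zero {σ : V_S} {x y : V_N} (h : B.b x y σ ≠ 0) : G_N.Adj x y := by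
  by_contra hxy
  exact h (B.supported x y hxy σ)

theorem eq_of_uses {σ σ' : V_S} {e : Sym2 V_N} (hW : W_c e ≤ 1) (h : B.Uses σ e)
    (h' : B.Uses σ' e) : σ = σ' := by
  classical
  induction e using Sym2.ind with
  | _ x y =>
  rw [uses_mk_iff] at h h'
  by_contra hne
  have hcap := B.capacity x y (adj_of_b_ne_zero h)
  have hpair : |B.b x y σ| + |B.b x y σ'| ≤ ∑ τ, |B.b x y τ| := by
    rw [← Finset.sum_pair (f := fun τ => |B.b x y τ|) hne]
    exact Finset.sum_le_sum_of_subset_of_nonneg (Finset.subset_univ _)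
      fun _ _ _ => abs_nonneg _
  have := Int.one_le_abs h
  have := Int.one_le_abs h'
  omega

end OneShotStrategy

namespace Reachable

variable {V_N V_S : Type*} [Fintype V_S] {G_N : SimpleGraph V_N} {W_c : Sym2 V_N → ℕ}
  {bs : List (OneShotStrategy V_N V_S G_N W_c)} {αD : V_S → V_N} {σ : V_S}

theorem exists_walk {n : V_N} (h : Reachable bs αD σ n) :
    ∃ w : G_N.Walk (αD σ) n, ∀ e ∈ w.edges, ∃ B ∈ bs, B.Uses σ e := by
  induction h with
  | base => exact ⟨.nil, by simp⟩
  | @step u v B _ hB hpos ih =>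
    obtain ⟨w, hw⟩ := ih
    have hb : B.b u v σ ≠ 0 := hpos.ne'
    refine ⟨w.concat (OneShotStrategy.adj_of_b_ne_zero hb), fun e he => ?_⟩
    rw [SimpleGraph.Walk.edges_concat, List.concat_eq_append, List.mem_append,
      List.mem_singleton] at he
    rcases he with he | rfl
    · exact hw e he
    · exact ⟨B, hB, OneShotStrategy.uses_mk_iff.mpr hb⟩

theorem of_walk {B : OneShotStrategy V_N V_S G_N W_c} (hB : B ∈ bs) {u v : V_N}
    (hu : Reachable bs αD σ u) (p : G_N.Walk u v)
    (hp : ∀ d ∈ p.darts, 0 < B.b d.fst d.snd σ) : Reachable bs αD σ v := by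
  induction p with
  | nil => exact hu
  | cons h p ih =>
    refine ih (.step B hu hB (hp _ List.mem_cons_self)) fun d hd => hp d ?_
    exact List.mem_cons_of_mem _ hd

end Reachable

namespace OneShotStrategy

variable {V_N V_S : Type*} [Fintype V_S] {G_N : SimpleGraph V_N} {W_c : Sym2 V_N → ℕ}
  (αD τ : V_S → V_N) (w : ∀ σ, G_N.Walk (αD σ) (τ σ))

open Finset in
noncomputable def ofWalks (hw : Pairwise fun σ σ' => (w σ).edges.Disjoint (w σ').edges)
    (hW : ∀ e ∈ G_N.edgeSet, 1 ≤ W_c e) : OneShotStrategy V_N V_S G_N W_c where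
  b x y σ := (w σ).flow x y
  antisymm x y σ := (w σ).flow_swap x y
  bounded x y σ := (w σ).abs_flow_le_one x y
  supported x y hxy σ := (w σ).flow_eq_zero fun h => hxy ((w σ).adj_of_mem_edges h)
  capacity x y hxy := by
    classical
    have hflow : ∀ σ, |(w σ).flow x y| ≤ if s(x, y) ∈ (w σ).edges then 1 else 0 := by
      intro σ
      split_ifs with h
      · exact (w σ).abs_flow_le_one x y
      · rw [(w σ).flow_eq_zero h, abs_zero]
    have hcard : #{σ | s(x, y) ∈ (w σ).edges} ≤ 1 :=
      card_le_one.mpr fun σ hσ σ' hσ' => by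
        by_contra hne
        exact hw hne (mem_filter.mp hσ).2 (mem_filter.mp hσ').2
    calc ∑ σ, |(w σ).flow x y|
        ≤ ∑ σ, if s(x, y) ∈ (w σ).edges then (1 : ℤ) else 0 := sum_le_sum fun σ _ => hflow σ
      _ = #{σ | s(x, y) ∈ (w σ).edges} := by rw [sum_boole]
      _ ≤ W_c s(x, y) := by exact_mod_cast hcard.trans (hW _ hxy)

variable {αD τ w}

theorem reachable_ofWalks (ht : ∀ σ, (w σ).IsTrail)
    (hw : Pairwise fun σ σ' => (w σ).edges.Disjoint (w σ').edges)
    (hW : ∀ e ∈ G_N.edgeSet, 1 ≤ W_c e) (σ : V_S) :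
    Reachable [ofWalks αD τ w hw hW] αD σ (τ σ) :=
  Reachable.base.of_walk (List.mem_singleton_self _) (w σ) fun _ hd => (ht σ).flow_pos hd

end OneShotStrategy

section PendantNetwork

variable {V : Type*} (G : SimpleGraph V) {k : ℕ} (s t : Fin k → V)

/-- The nodes `inr (inl i)` and `inr (inr i)` are the paper's `aᵢ` and `bᵢ`, pendant at `s i`
and `t i`. -/
def pendantNetwork : SimpleGraph (V ⊕ (Fin k ⊕ Fin k)) :=
  SimpleGraph.fromRel fun a c =>
    (∃ u v, G.Adj u v ∧ a = Sum.inl u ∧ c = Sum.inl v) ∨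
    (∃ i : Fin k, a = Sum.inr (Sum.inl i) ∧ c = Sum.inl (s i)) ∨
    (∃ i : Fin k, a = Sum.inr (Sum.inr i) ∧ c = Sum.inl (t i))

def pendantCollapse : V ⊕ (Fin k ⊕ Fin k) → V :=
  Sum.elim id (Sum.elim s t)

def bellMatching (k : ℕ) : SimpleGraph (Fin k ⊕ Fin k) :=
  SimpleGraph.fromRel fun a c => ∃ i : Fin k, a = Sum.inl i ∧ c = Sum.inr i

variable {G s t}

theorem pendantNetwork_adj_inl_inl {u v : V} :
    (pendantNetwork G s t).Adj (.inl u) (.inl v) ↔ G.Adj u v := by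
  refine ⟨?_, fun h => ⟨by simpa using h.ne, .inl (.inl ⟨u, v, h, rfl, rfl⟩)⟩⟩
  rintro ⟨-, h | h⟩ <;> rcases h with ⟨u', v', h, hu, hv⟩ | ⟨i, hu, hv⟩ | ⟨i, hu, hv⟩ <;>
    simp_all [SimpleGraph.adj_comm]

theorem pendantNetwork_adj_source (i : Fin k) :
    (pendantNetwork G s t).Adj (.inr (.inl i)) (.inl (s i)) :=
  ⟨by simp, .inl (.inr (.inl ⟨i, rfl, rfl⟩))⟩

theorem pendantNetwork_adj_target (i : Fin k) :
    (pendantNetwork G s t).Adj (.inr (.inr i)) (.inl (t i)) :=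
  ⟨by simp, .inl (.inr (.inr ⟨i, rfl, rfl⟩))⟩

theorem eq_inl_pendantCollapse_of_adj_of_ne {x y : V ⊕ (Fin k ⊕ Fin k)}
    (h : (pendantNetwork G s t).Adj x y) (hxy : pendantCollapse s t x ≠ pendantCollapse s t y) :
    x = .inl (pendantCollapse s t x) ∧ y = .inl (pendantCollapse s t y) := by
  rcases h with ⟨-, h | h⟩ <;>
    rcases h with ⟨u, v, -, rfl, rfl⟩ | ⟨i, rfl, rfl⟩ | ⟨i, rfl, rfl⟩ <;>
    simp_all [pendantCollapse]

theorem bellMatching_adj_inl_inr (i : Fin k) : (bellMatching k).Adj (.inl i) (.inr i) :=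
  ⟨by simp, .inl ⟨i, rfl, rfl⟩⟩

theorem elim_id_id_eq_of_bellMatching_adj {σ σ' : Fin k ⊕ Fin k}
    (h : (bellMatching k).Adj σ σ') :
    σ.elim id id = σ'.elim id id := by
  rcases h with ⟨-, ⟨i, rfl, rfl⟩ | ⟨i, rfl, rfl⟩⟩ <;> rfl

theorem map_inl_map_pendantCollapse {e : Sym2 (V ⊕ (Fin k ⊕ Fin k))}
    (he : e ∈ (pendantNetwork G s t).edgeSet) (hd : ¬(e.map (pendantCollapse s t)).IsDiag) :
    (e.map (pendantCollapse s t)).map Sum.inl = e := by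
  induction e using Sym2.ind with
  | _ x y =>
  obtain ⟨hx, hy⟩ := eq_inl_pendantCollapse_of_adj_of_ne he hd
  rw [Sym2.map_mk, Sym2.map_mk, ← hx, ← hy]

def pendantNetwork.inlHom : G →g pendantNetwork G s t :=
  ⟨Sum.inl, pendantNetwork_adj_inl_inl.mpr⟩

end PendantNetwork

section Correspondence

open SimpleGraph

variable {V : Type*} {G : SimpleGraph V} {k : ℕ} {s t : Fin k → V}

theorem exists_path_of_isValid {W_c : Sym2 (V ⊕ (Fin k ⊕ Fin k)) → ℕ}
    {B : OneShotStrategy (V ⊕ (Fin k ⊕ Fin k)) (Fin k ⊕ Fin k) (pendantNetwork G s t) W_c}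
    (hB : IsValid [B] (bellMatching k) Sum.inr) (i : Fin k) :
    ∃ P : G.Walk (s i) (t i), P.IsPath ∧
      ∀ e ∈ P.edges, ∃ σ : Fin k ⊕ Fin k, σ.elim id id = i ∧ B.Uses σ (e.map Sum.inl) := by
  classical
  obtain ⟨n, h₁, h₂⟩ := hB _ _ (bellMatching_adj_inl_inr i)
  obtain ⟨w₁, hw₁⟩ := h₁.exists_walk
  obtain ⟨w₂, hw₂⟩ := h₂.exists_walk
  obtain ⟨q, hq⟩ := (w₁.append w₂.reverse).exists_walk_edges_subset_map_edges
    (pendantCollapse s t) fun x y h hxy => by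
      obtain ⟨hx, hy⟩ := eq_inl_pendantCollapse_of_adj_of_ne h hxy
      rw [hx, hy] at h
      exact pendantNetwork_adj_inl_inl.mp h
  refine ⟨q.bypass, q.bypass_isPath, fun e he => ?_⟩
  obtain ⟨e', he', rfl⟩ := List.mem_map.mp (hq (q.edges_bypass_subset_edges he))
  rw [map_inl_map_pendantCollapse (Walk.edges_subset_edgeSet _ he')
    (G.not_isDiag_of_mem_edgeSet (q.bypass.edges_subset_edgeSet he))]
  rw [Walk.edges_append, Walk.edges_reverse, List.mem_append, List.mem_reverse] at he'
  rcases he' with he' | he'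
  · exact ⟨.inl i, rfl, by simpa using hw₁ e' he'⟩
  · exact ⟨.inr i, rfl, by simpa using hw₂ e' he'⟩

def pendantWalks (P : ∀ i, G.Walk (s i) (t i)) :
    ∀ σ : Fin k ⊕ Fin k, (pendantNetwork G s t).Walk (.inr σ) (.inl (t (σ.elim id id)))
  | .inl i => .cons (pendantNetwork_adj_source i) ((P i).map pendantNetwork.inlHom)
  | .inr i => .cons (pendantNetwork_adj_target i) .nil

variable {P : ∀ i, G.Walk (s i) (t i)}

theorem pendantWalks_isTrail (hP : ∀ i, (P i).IsTrail) (σ : Fin k ⊕ Fin k) :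
    (pendantWalks P σ).IsTrail := by
  rcases σ with i | i
  · refine ((hP i).map (f := pendantNetwork.inlHom) Sum.inl_injective).cons _ ?_
    simp only [Walk.edges_map, List.mem_map, not_exists, not_and]
    exact fun e _ => Sym2.map_inl_ne_mk_inr _ _ _
  · exact Walk.IsTrail.nil.cons _ (by simp)

theorem pendantWalks_pairwise_disjoint
    (hP : Pairwise fun i j => (P i).edges.Disjoint (P j).edges) :
    Pairwise fun σ σ' => (pendantWalks P σ).edges.Disjoint (pendantWalks P σ').edges := by
  rintro (i | i) (j | j) hij e he he' <;>
    simp only [pendantWalks, pendantNetwork.inlHom, Sum.elim_inl, Sum.elim_inr, id_eq,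
      Walk.edges_cons, Walk.edges_map, Walk.edges_nil, RelHom.coeFn_mk, List.mem_cons,
      List.mem_map, List.not_mem_nil, or_false, ne_eq, Sum.inl.injEq, Sum.inr.injEq,
      reduceCtorEq, not_false_eq_true] at he he' hij
  · rcases he with rfl | ⟨a, ha, rfl⟩ <;> rcases he' with h | ⟨a', ha', h⟩
    · simp_all
    · exact Sym2.map_inl_ne_mk_inr _ _ _ h
    · exact Sym2.map_inl_ne_mk_inr _ _ _ h
    · exact hP hij ha (Sym2.map.injective Sum.inl_injective h ▸ ha')
  · rcases he with rfl | ⟨a, ha, rfl⟩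
    · simp_all
    · exact Sym2.map_inl_ne_mk_inr _ _ _ he'
  · rcases he' with h | ⟨a, ha, h⟩
    · simp_all
    · exact Sym2.map_inl_ne_mk_inr _ _ _ (h.trans he)
  · simp_all

end Correspondence

theorem matching_distribution_iff_edge_disjoint_paths_general {V : Type*} (G : SimpleGraph V)
    (k : ℕ) (s t : Fin k → V) :
    (∃ b : OneShotStrategy (V ⊕ (Fin k ⊕ Fin k)) (Fin k ⊕ Fin k)
        (SimpleGraph.fromRel fun a c =>
          (∃ u v, G.Adj u v ∧ a = Sum.inl u ∧ c = Sum.inl v) ∨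
          (∃ i : Fin k, a = Sum.inr (Sum.inl i) ∧ c = Sum.inl (s i)) ∨
          (∃ i : Fin k, a = Sum.inr (Sum.inr i) ∧ c = Sum.inl (t i)))
        (fun _ => 1),
      IsValid [b]
        (SimpleGraph.fromRel fun a c => ∃ i : Fin k, a = Sum.inl i ∧ c = Sum.inr i)
        Sum.inr)
    ↔ (∃ P : ∀ i : Fin k, G.Walk (s i) (t i),
        (∀ i, (P i).IsPath) ∧
        ∀ i j, i ≠ j → ∀ e, e ∈ (P i).edges → e ∉ (P j).edges) := by
  constructor
  · rintro ⟨B, hB⟩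
    choose P hP huses using exists_path_of_isValid (G := G) (s := s) (t := t) hB
    refine ⟨P, hP, fun i j hij e hi hj => hij ?_⟩
    obtain ⟨σ, rfl, hσ⟩ := huses i e hi
    obtain ⟨σ', rfl, hσ'⟩ := huses j e hj
    rw [B.eq_of_uses le_rfl hσ hσ']
  · rintro ⟨P, hP, hdisj⟩
    have ht := pendantWalks_isTrail fun i => (hP i).isTrail
    have hw := pendantWalks_pairwise_disjoint (P := P) fun i j hij e => hdisj i j hij e
    refine ⟨.ofWalks Sum.inr _ (pendantWalks P) hw fun _ _ => le_rfl, fun σ σ' hσσ' => ?_⟩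
    refine ⟨_, OneShotStrategy.reachable_ofWalks ht hw _ σ, ?_⟩
    rw [elim_id_id_eq_of_bellMatching_adj hσσ']
    exact OneShotStrategy.reachable_ofWalks ht hw _ σ'

/-- **One-shot distribution of a matching of Bell pairs is equivalent to multi-pair
edge-disjoint paths.**  Given a graph `G` and pairs `(sᵢ, tᵢ)` with `sᵢ ≠ tᵢ`, build
the network on `V ⊕ (Fin k ⊕ Fin k)` whose channels (all of width `1`) are the edges
of `G` together with channels `aᵢ–sᵢ` and `bᵢ–tᵢ`, where `aᵢ = inr (inl i)` and
`bᵢ = inr (inr i)`; let the graph state be the matching `{(inl i)(inr i)}` on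
`Fin k ⊕ Fin k` with `αD = Sum.inr`.  Then a valid one-shot Bell pair strategy exists
iff `G` contains pairwise edge-disjoint paths `Pᵢ` joining `sᵢ` to `tᵢ`. -/
theorem matching_distribution_iff_edge_disjoint_paths {V : Type*} (G : SimpleGraph V)
    (k : ℕ) (s t : Fin k → V) (hst : ∀ i, s i ≠ t i) :
    (∃ b : OneShotStrategy (V ⊕ (Fin k ⊕ Fin k)) (Fin k ⊕ Fin k)
        (SimpleGraph.fromRel fun a c =>
          (∃ u v, G.Adj u v ∧ a = Sum.inl u ∧ c = Sum.inl v) ∨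
          (∃ i : Fin k, a = Sum.inr (Sum.inl i) ∧ c = Sum.inl (s i)) ∨
          (∃ i : Fin k, a = Sum.inr (Sum.inr i) ∧ c = Sum.inl (t i)))
        (fun _ => 1),
      IsValid [b]
        (SimpleGraph.fromRel fun a c => ∃ i : Fin k, a = Sum.inl i ∧ c = Sum.inr i)
        Sum.inr)
    ↔ (∃ P : ∀ i : Fin k, G.Walk (s i) (t i),
        (∀ i, (P i).IsPath) ∧
        ∀ i j, i ≠ j → ∀ e, e ∈ (P i).edges → e ∉ (P j).edges) :=
  matching_distribution_iff_edge_disjoint_paths_general G k s t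
end
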